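/- The Hölder subregularity modulus of order q of F at (x̄,ȳ) is bounded above by the uniform strict q-slope: sr_q[F](x̄,ȳ) ≤ \overline{|∇F|}^◇_q(x̄,ȳ). -/
import Mathlib


open Filter Metric Set Topology
open scoped Classical

noncomputable section

namespace HolderPaper

/-- Extended-real quotient `a / d` of an extended real by a nonnegative real,
with the convention that division by `0` yields `⊤`. -/
def equot (a : EReal) (d : ℝ) : EReal := if d = 0 then ⊤ else a * ((d⁻¹ : ℝ) : EReal)

section MetricDefs

variable {X Y : Type*} [MetricSpace X] [MetricSpace Y]

/-- The asymmetric maximum-type distance `d_ρ((x,y),(u,v)) = max{d(x,u), ρ d(y,v)}`. -/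
def drho (ρ : ℝ) (p q : X × Y) : ℝ := max (dist p.1 q.1) (ρ * dist p.2 q.2)

/-- Positive part `f₊`. -/
def fplus (f : X × Y → EReal) (p : X × Y) : EReal := max (f p) 0

/-- Condition (P1): `f(x,y) > 0` whenever `y ≠ ybar`. -/
def P1 (f : X × Y → EReal) (ybar : Y) : Prop := ∀ p : X × Y, p.2 ≠ ybar → 0 < f p

/-- Condition (P2): `liminf_{f(x,y)↓0} f(x,y)/d(y,ybar) > 0`. -/
def P2 (f : X × Y → EReal) (ybar : Y) : Prop :=
  0 < liminf (fun p : X × Y => equot (f p) (dist p.2 ybar)) ((𝓝[>] (0 : EReal)).comap f)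

/-- The lower 0-level set `S(f) = {x | f(x,ybar) ≤ 0}`. -/
def Sf (f : X × Y → EReal) (ybar : Y) : Set X := {x | f (x, ybar) ≤ 0}

/-- The error bound modulus `Er f(xbar,ybar)`:
`liminf` of `f(x,y)/d(x,S(f))` over pairs `(x,y)` with `f(x,y) > 0` as `x → xbar`. -/
def erMod (f : X × Y → EReal) (xbar : X) (ybar : Y) : EReal :=
  liminf (fun p : X × Y => equot (f p) (infDist p.1 (Sf f ybar)))
    ((𝓝 xbar).comap Prod.fst ⊓ 𝓟 {p : X × Y | 0 < f p})

/-- `f` has an error bound w.r.t. `x` at `(xbar,ybar)` with constant `τ`. -/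
def hasErrorBound (f : X × Y → EReal) (xbar : X) (ybar : Y) (τ : ℝ) : Prop :=
  ∃ U ∈ 𝓝 xbar, ∀ x ∈ U, ∀ y : Y, ((τ * infDist x (Sf f ybar) : ℝ) : EReal) ≤ fplus f (x, y)

/-- The nonlocal ρ-slope `|∇f|◇_ρ(x,y)` (set to `⊤` if `f(x,y) = ⊤`). -/
def nslope (f : X × Y → EReal) (ρ : ℝ) (p : X × Y) : EReal :=
  if f p = ⊤ then ⊤
  else ⨆ (q : X × Y) (_ : q ≠ p), equot (max (f p - fplus f q) 0) (drho ρ p q)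

/-- The (local) ρ-slope `|∇f|_ρ(x,y)`. -/
def lslope (f : X × Y → EReal) (ρ : ℝ) (p : X × Y) : EReal :=
  limsup (fun q : X × Y => equot (max (f p - f q) 0) (drho ρ q p)) (𝓝[≠] p)

/-- The uniform strict outer slope `\overline{|∇f|}^◇(xbar,ybar)`
(`lim_{ρ↓0}` of a quantity nonincreasing in `ρ`, i.e. the supremum over `ρ > 0`). -/
def uss (f : X × Y → EReal) (xbar : X) (ybar : Y) : EReal :=
  ⨆ (ρ : ℝ) (_ : 0 < ρ),
    ⨅ (p : X × Y) (_ : dist p.1 xbar < ρ ∧ 0 < f p ∧ f p < (ρ : EReal)), nslope f ρ p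

/-- The strict outer slope `\overline{|∇f|}^{>}(xbar,ybar)`. -/
def sos (f : X × Y → EReal) (xbar : X) (ybar : Y) : EReal :=
  ⨆ (ρ : ℝ) (_ : 0 < ρ),
    ⨅ (p : X × Y) (_ : dist p.1 xbar < ρ ∧ 0 < f p ∧ f p < (ρ : EReal)), lslope f ρ p

/-- The modified strict outer slope `\overline{|∇f|}^{>+}(xbar,ybar)`. -/
def msos (f : X × Y → EReal) (xbar : X) (ybar : Y) : EReal :=
  ⨆ (ρ : ℝ) (_ : 0 < ρ),
    ⨅ (p : X × Y) (_ : dist p.1 xbar < ρ ∧ 0 < f p ∧ f p < (ρ : EReal)),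
      max (lslope f ρ p) (equot (f p) (dist p.1 xbar))

/-- Graph of a set-valued mapping. -/
def gph (F : X → Set Y) : Set (X × Y) := {p | p.2 ∈ F p.1}

/-- Inverse image `F⁻¹(ybar)`. -/
def Finv (F : X → Set Y) (ybar : Y) : Set X := {x | ybar ∈ F x}

/-- The function `f(x,y) = (d(y,ybar))^q` on `gph F`, `+∞` elsewhere. -/
def fFq (F : X → Set Y) (ybar : Y) (qq : ℝ) : X × Y → EReal :=
  fun p => if p ∈ gph F then ((dist p.2 ybar ^ qq : ℝ) : EReal) else ⊤

/-- The function `f(x,y) = ‖y - ybar‖` on `gph F`, `+∞` elsewhere (case `q = 1`). -/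
def fF1 (F : X → Set Y) (ybar : Y) : X × Y → EReal :=
  fun p => if p ∈ gph F then ((dist p.2 ybar : ℝ) : EReal) else ⊤

/-- The ρ-slope `|∇F|_ρ(x,y)` of a set-valued mapping at `(x,y) ∈ gph F`. -/
def FslopeR (F : X → Set Y) (ybar : Y) (ρ : ℝ) (p : X × Y) : EReal :=
  limsup (fun u : X × Y => equot ((max (dist p.2 ybar - dist u.2 ybar) 0 : ℝ) : EReal) (drho ρ u p))
    (𝓝[gph F \ {p}] p)

/-- The nonlocal (q,ρ)-slope `|∇F|◇_{q,ρ}(x,y)` of a set-valued mapping. -/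
def FnslopeQ (F : X → Set Y) (ybar : Y) (qq ρ : ℝ) (p : X × Y) : EReal :=
  ⨆ (u : X × Y) (_ : u ∈ gph F ∧ u ≠ p),
    equot ((max (dist p.2 ybar ^ qq - dist u.2 ybar ^ qq) 0 : ℝ) : EReal) (drho ρ u p)

/-- The uniform strict q-slope `\overline{|∇F|}^◇_q(xbar,ybar)`. -/
def ussFq (F : X → Set Y) (xbar : X) (ybar : Y) (qq : ℝ) : EReal :=
  ⨆ (ρ : ℝ) (_ : 0 < ρ),
    ⨅ (p : X × Y)
      (_ : p ∈ gph F ∧ dist p.1 xbar < ρ ∧ dist p.2 ybar < ρ ∧ p.1 ∉ Finv F ybar),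
      FnslopeQ F ybar qq ρ p

/-- The strict q-slope `\overline{|∇F|}_q(xbar,ybar)`. -/
def sosFq (F : X → Set Y) (xbar : X) (ybar : Y) (qq : ℝ) : EReal :=
  (qq : EReal) *
    ⨆ (ρ : ℝ) (_ : 0 < ρ),
      ⨅ (p : X × Y)
        (_ : p ∈ gph F ∧ dist p.1 xbar < ρ ∧ dist p.2 ybar < ρ ∧ p.1 ∉ Finv F ybar),
        ((dist p.2 ybar ^ (qq - 1) : ℝ) : EReal) * FslopeR F ybar ρ p

/-- The modified strict q-slope `\overline{|∇F|}^{+}_q(xbar,ybar)`. -/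
def msosFq (F : X → Set Y) (xbar : X) (ybar : Y) (qq : ℝ) : EReal :=
  ⨆ (ρ : ℝ) (_ : 0 < ρ),
    ⨅ (p : X × Y)
      (_ : p ∈ gph F ∧ dist p.1 xbar < ρ ∧ dist p.2 ybar < ρ ∧ p.1 ∉ Finv F ybar),
      max (((qq * dist p.2 ybar ^ (qq - 1) : ℝ) : EReal) * FslopeR F ybar ρ p)
        (equot ((dist p.2 ybar ^ qq : ℝ) : EReal) (dist p.1 xbar))

/-- The Hölder subregularity modulus of order `q`:
`liminf_{x→xbar, x∉F⁻¹(ybar)} (d(ybar,F(x)))^q / d(x,F⁻¹(ybar))`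
(with `d(ybar,∅) = +∞`). -/
def srq (F : X → Set Y) (xbar : X) (ybar : Y) (qq : ℝ) : EReal :=
  liminf
    (fun x : X =>
      equot (if F x = ∅ then ⊤ else ((infDist ybar (F x) ^ qq : ℝ) : EReal))
        (infDist x (Finv F ybar)))
    (𝓝[(Finv F ybar)ᶜ] xbar)

end MetricDefs

section NormedDefs

variable {X Y : Type*} [NormedAddCommGroup X] [NormedSpace ℝ X]
  [NormedAddCommGroup Y] [NormedSpace ℝ Y]

/-- The Fréchet subdifferential of `f : X × Y → ℝ∪{+∞}` at `p`, as a set of pairs of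
continuous linear functionals (empty when `f p = ⊤`). -/
def fsubdiff (f : X × Y → EReal) (p : X × Y) : Set ((X →L[ℝ] ℝ) × (Y →L[ℝ] ℝ)) :=
  {φ | f p ≠ ⊤ ∧ 0 ≤ liminf
      (fun q : X × Y =>
        equot (f q - f p - ((φ.1 (q.1 - p.1) + φ.2 (q.2 - p.2) : ℝ) : EReal)) (dist q p))
      (𝓝[≠] p)}

/-- The subdifferential ρ-slope `|∂f|_ρ(x,y)`. -/
def sdslope (f : X × Y → EReal) (ρ : ℝ) (p : X × Y) : EReal :=
  ⨅ (φ : (X →L[ℝ] ℝ) × (Y →L[ℝ] ℝ)) (_ : φ ∈ fsubdiff f p ∧ ‖φ.2‖ < ρ), (‖φ.1‖ : EReal)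

/-- The strict outer subdifferential slope `\overline{|∂f|}^{>}(xbar,ybar)`. -/
def ssds (f : X × Y → EReal) (xbar : X) (ybar : Y) : EReal :=
  ⨆ (ρ : ℝ) (_ : 0 < ρ),
    ⨅ (p : X × Y) (_ : dist p.1 xbar < ρ ∧ 0 < f p ∧ f p < (ρ : EReal)), sdslope f ρ p

/-- The modified strict outer subdifferential slope `\overline{|∂f|}^{>+}(xbar,ybar)`. -/
def mssds (f : X × Y → EReal) (xbar : X) (ybar : Y) : EReal :=
  ⨆ (ρ : ℝ) (_ : 0 < ρ),
    ⨅ (p : X × Y) (_ : dist p.1 xbar < ρ ∧ 0 < f p ∧ f p < (ρ : EReal)),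
      max (sdslope f ρ p) (equot (f p) (dist p.1 xbar))

/-- `f` is convex on the set `U` (with extended-real values). -/
def convexOnE (U : Set (X × Y)) (f : X × Y → EReal) : Prop :=
  Convex ℝ U ∧ ∀ p ∈ U, ∀ q ∈ U, ∀ t : ℝ, 0 ≤ t → t ≤ 1 →
    f (t • p + (1 - t) • q) ≤ (t : EReal) * f p + ((1 - t : ℝ) : EReal) * f q

/-- The Fréchet normal cone to `Ω ⊂ X × Y` at `p ∈ Ω`. -/
def ncone (Ω : Set (X × Y)) (p : X × Y) : Set ((X →L[ℝ] ℝ) × (Y →L[ℝ] ℝ)) :=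
  {φ | limsup
      (fun q : X × Y =>
        equot (((φ.1 (q.1 - p.1) + φ.2 (q.2 - p.2) : ℝ)) : EReal) (dist q p))
      (𝓝[Ω \ {p}] p) ≤ 0}

/-- The Fréchet coderivative `D*F(x,y)(y*)`. -/
def coderiv (F : X → Set Y) (p : X × Y) (ys : Y →L[ℝ] ℝ) : Set (X →L[ℝ] ℝ) :=
  {xs | (xs, -ys) ∈ ncone (gph F) p}

/-- The (normalized) duality mapping `J(y) = {y* : ‖y*‖ = 1, ⟨y*,y⟩ = ‖y‖}`. -/
def Jdual (y : Y) : Set (Y →L[ℝ] ℝ) := {ys | ‖ys‖ = 1 ∧ ys y = ‖y‖}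

/-- The subdifferential ρ-slope of `F` at `(x,y) ∈ gph F`:
`inf{‖x*‖ : x* ∈ D*F(x,y)(J(y-ybar) + ρ𝔹*)}`. -/
def FsdSlope (F : X → Set Y) (ybar : Y) (ρ : ℝ) (p : X × Y) : EReal :=
  ⨅ (xs : X →L[ℝ] ℝ)
    (_ : ∃ ws : Y →L[ℝ] ℝ, (∃ ys ∈ Jdual (p.2 - ybar), ‖ws - ys‖ ≤ ρ) ∧ xs ∈ coderiv F p ws),
    (‖xs‖ : EReal)

/-- `ξ_q(y) = ‖y - ybar‖^{1-q}/q`. -/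
def xiq (qq : ℝ) (ybar y : Y) : ℝ := ‖y - ybar‖ ^ (1 - qq) / qq

/-- The strict subdifferential q-slope `\overline{|∂F|}_q(xbar,ybar)`. -/
def ssdFq (F : X → Set Y) (xbar : X) (ybar : Y) (qq : ℝ) : EReal :=
  (qq : EReal) *
    ⨆ (ρ : ℝ) (_ : 0 < ρ),
      ⨅ (p : X × Y)
        (_ : p ∈ gph F ∧ ‖p.1 - xbar‖ < ρ ∧ ‖p.2 - ybar‖ < ρ ∧ p.1 ∉ Finv F ybar),
        ((‖p.2 - ybar‖ ^ (qq - 1) : ℝ) : EReal) * FsdSlope F ybar (xiq qq ybar p.2 * ρ) p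

/-- The modified strict subdifferential q-slope `\overline{|∂F|}^{+}_q(xbar,ybar)`. -/
def msdFq (F : X → Set Y) (xbar : X) (ybar : Y) (qq : ℝ) : EReal :=
  ⨆ (ρ : ℝ) (_ : 0 < ρ),
    ⨅ (p : X × Y)
      (_ : p ∈ gph F ∧ ‖p.1 - xbar‖ < ρ ∧ ‖p.2 - ybar‖ < ρ ∧ p.1 ∉ Finv F ybar),
      max (((qq * ‖p.2 - ybar‖ ^ (qq - 1) : ℝ) : EReal) * FsdSlope F ybar (xiq qq ybar p.2 * ρ) p)
        (equot ((‖p.2 - ybar‖ ^ qq : ℝ) : EReal) ‖p.1 - xbar‖)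

/-- The normalized ε-enlargement `J^q_ε(y)` of the q-duality mapping
`J^q(y) = q‖y‖^{q-1} J(y)`. -/
def JqEps (qq ε : ℝ) (y : Y) : Set (Y →L[ℝ] ℝ) :=
  {ws | ∃ us ∈ Jdual y, ∃ vs : Y →L[ℝ] ℝ, ‖vs‖ ≤ 1 ∧
    (qq * ‖y‖ ^ (qq - 1)) • us + ε • vs ≠ 0 ∧
    ws = ‖(qq * ‖y‖ ^ (qq - 1)) • us + ε • vs‖⁻¹ • ((qq * ‖y‖ ^ (qq - 1)) • us + ε • vs)}

/-- The constant `β` of Li and Mordukhovich. -/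
def betaLM (F : X → Set Y) (xbar : X) (ybar : Y) (qq : ℝ) : EReal :=
  ⨆ (ε : ℝ) (_ : 0 < ε),
    ⨅ (p : X × Y) (xs : X →L[ℝ] ℝ)
      (_ : p ∈ gph F ∧ p.1 ∉ Finv F ybar ∧ ‖p.1 - xbar‖ < ε ∧
           ‖p.2 - ybar‖ < min ε (‖p.1 - xbar‖ ^ (1 / 2 : ℝ)) ∧
           ∃ ws ∈ JqEps qq ε (p.2 - ybar), xs ∈ coderiv F p ws),
      ((qq * ‖xs‖ * ‖p.2 - ybar‖ ^ (qq - 1) : ℝ) : EReal)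

end NormedDefs

end HolderPaper

namespace HolderPaper


section Statement16Aux

variable {X Y : Type*} [MetricSpace X] [MetricSpace Y]

lemma equot_coe_pos (a : ℝ) {d : ℝ} (hd : 0 < d) :
    equot (a : EReal) d = ((a / d : ℝ) : EReal) := by
  rw [equot, if_neg hd.ne', ← EReal.coe_mul, div_eq_mul_inv]

lemma equot_nonneg' {a : EReal} {d : ℝ} (ha : 0 ≤ a) (hd : 0 ≤ d) : 0 ≤ equot a d := by
  rw [equot]
  split
  · exact le_top
  · exact mul_nonneg ha (EReal.coe_nonneg.mpr (inv_nonneg.mpr hd))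

lemma ussFq_nonneg (F : X → Set Y) (xbar : X) (ybar : Y)
    (hbar : (xbar, ybar) ∈ gph F) (qq : ℝ) :
    (0 : EReal) ≤ ussFq F xbar ybar qq := by
  refine le_iSup₂_of_le 1 one_pos (le_iInf₂ fun p hp => ?_)
  obtain ⟨hpg, -, -, hpf⟩ := hp
  have hne : ((xbar, ybar) : X × Y) ≠ p := by
    intro h
    exact hpf (show ybar ∈ F p.1 by rw [← h]; exact hbar)
  refine le_iSup₂_of_le (xbar, ybar) ⟨hbar, hne⟩ (equot_nonneg' ?_ ?_)
  · exact EReal.coe_nonneg.mpr (le_max_right _ _)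
  · exact le_trans dist_nonneg (le_max_left _ _)

lemma statement16_key (F : X → Set Y) (xbar : X) (ybar : Y)
    (hbar : (xbar, ybar) ∈ gph F)
    (qq : ℝ) (hq0 : 0 < qq) (hq1 : qq ≤ 1)
    {α α' : ℝ} (hα0 : 0 < α) (hαα' : α < α')
    (hs : (α' : EReal) < srq F xbar ybar qq) :
    (α : EReal) ≤ ussFq F xbar ybar qq := by
  have hne : (Finv F ybar).Nonempty := ⟨xbar, hbar⟩
  unfold srq at hs
  have hev : ∀ᶠ x in 𝓝[(Finv F ybar)ᶜ] xbar,
      (α' : EReal) < equot (if F x = ∅ then ⊤ else ((infDist ybar (F x) ^ qq : ℝ) : EReal))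
        (infDist x (Finv F ybar)) := eventually_lt_of_lt_liminf hs
  obtain ⟨ε, hε, hball⟩ := Metric.mem_nhdsWithin_iff.1 hev
  set ρ : ℝ := min ε (min 1 (1 / α)) with hρdef
  have hρ : 0 < ρ := lt_min hε (lt_min one_pos (by positivity))
  have hρε : ρ ≤ ε := min_le_left _ _
  have hρ1 : ρ ≤ 1 := le_trans (min_le_right _ _) (min_le_left _ _)
  have hρα : ρ ≤ 1 / α := le_trans (min_le_right _ _) (min_le_right _ _)
  refine le_iSup₂_of_le ρ hρ (le_iInf₂ fun p hp => ?_)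
  obtain ⟨hpg, hpx, hpy, hpf⟩ := hp
  have hyne : p.2 ≠ ybar := fun h => hpf (show ybar ∈ F p.1 from h ▸ hpg)
  have hdpy : 0 < dist p.2 ybar := dist_pos.mpr hyne
  have hdpy1 : dist p.2 ybar ≤ 1 := le_trans hpy.le hρ1
  have hdq : dist p.2 ybar ≤ dist p.2 ybar ^ qq := by
    have h := Real.rpow_le_rpow_of_exponent_ge hdpy hdpy1 hq1
    simpa [Real.rpow_one] using h
  have main : ∀ u ∈ Finv F ybar,
      α * max (dist p.1 u) (ρ * dist p.2 ybar) ≤ dist p.2 ybar ^ qq →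
      (α : EReal) ≤ FnslopeQ F ybar qq ρ p := by
    intro u hu hle
    have hune : ((u, ybar) : X × Y) ≠ p := fun h => hyne (by rw [← h])
    refine le_iSup₂_of_le (u, ybar) ⟨hu, hune⟩ ?_
    have hnum : max (dist p.2 ybar ^ qq - dist ((u, ybar) : X × Y).2 ybar ^ qq) 0
        = dist p.2 ybar ^ qq := by
      show max (dist p.2 ybar ^ qq - dist ybar ybar ^ qq) 0 = dist p.2 ybar ^ qq
      rw [dist_self, Real.zero_rpow hq0.ne', sub_zero,
        max_eq_left (Real.rpow_nonneg dist_nonneg qq)]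
    have hden : drho ρ ((u, ybar) : X × Y) p = max (dist p.1 u) (ρ * dist p.2 ybar) := by
      simp [drho, dist_comm]
    have hdenpos : 0 < max (dist p.1 u) (ρ * dist p.2 ybar) :=
      lt_max_of_lt_right (by positivity)
    rw [hnum, hden, equot_coe_pos _ hdenpos, EReal.coe_le_coe_iff]
    exact (le_div_iff₀ hdenpos).mpr hle
  by_cases hD : infDist p.1 (Finv F ybar) < ρ * dist p.2 ybar
  · obtain ⟨u, hu, hud⟩ := (Metric.infDist_lt_iff hne).mp hD
    refine main u hu ?_
    rw [max_eq_right hud.le]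
    have hαρ : α * ρ ≤ 1 := by
      have := mul_le_mul_of_nonneg_left hρα hα0.le
      rwa [mul_one_div_cancel hα0.ne'] at this
    calc α * (ρ * dist p.2 ybar) = (α * ρ) * dist p.2 ybar := by ring
      _ ≤ 1 * dist p.2 ybar := mul_le_mul_of_nonneg_right hαρ dist_nonneg
      _ = dist p.2 ybar := one_mul _
      _ ≤ dist p.2 ybar ^ qq := hdq
  · have hρd : ρ * dist p.2 ybar ≤ infDist p.1 (Finv F ybar) := not_lt.mp hD
    have hDpos : 0 < infDist p.1 (Finv F ybar) := lt_of_lt_of_le (by positivity) hρd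
    have hPx : (α' : EReal) <
        equot (if F p.1 = ∅ then ⊤ else ((infDist ybar (F p.1) ^ qq : ℝ) : EReal))
          (infDist p.1 (Finv F ybar)) :=
      hball ⟨mem_ball.mpr (lt_of_lt_of_le hpx hρε), hpf⟩
    have hFne : F p.1 ≠ ∅ := (Set.nonempty_of_mem (show p.2 ∈ F p.1 from hpg)).ne_empty
    rw [if_neg hFne, equot_coe_pos _ hDpos, EReal.coe_lt_coe_iff] at hPx
    have h2 : α' * infDist p.1 (Finv F ybar) < infDist ybar (F p.1) ^ qq := by
      have := (lt_div_iff₀ hDpos).mp hPx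
      linarith [this]
    have h3 : infDist ybar (F p.1) ^ qq ≤ dist p.2 ybar ^ qq := by
      refine Real.rpow_le_rpow Metric.infDist_nonneg ?_ hq0.le
      rw [dist_comm]
      exact Metric.infDist_le_dist_of_mem hpg
    have hlt : infDist p.1 (Finv F ybar) < (α' / α) * infDist p.1 (Finv F ybar) := by
      have h1 : 1 < α' / α := (one_lt_div hα0).mpr hαα'
      nlinarith
    obtain ⟨u, hu, hud⟩ := (Metric.infDist_lt_iff hne).mp hlt
    refine main u hu ?_
    have hmax : max (dist p.1 u) (ρ * dist p.2 ybar)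
        ≤ (α' / α) * infDist p.1 (Finv F ybar) :=
      max_le hud.le (le_trans hρd (le_mul_of_one_le_left hDpos.le
        ((one_le_div hα0).mpr hαα'.le)))
    calc α * max (dist p.1 u) (ρ * dist p.2 ybar)
        ≤ α * ((α' / α) * infDist p.1 (Finv F ybar)) :=
          mul_le_mul_of_nonneg_left hmax hα0.le
      _ = α' * infDist p.1 (Finv F ybar) := by field_simp
      _ ≤ dist p.2 ybar ^ qq := le_of_lt (lt_of_lt_of_le h2 h3)

end Statement16Aux

/-- `sr_q[F](xbar,ybar) ≤ \overline{|∇F|}^◇_q(xbar,ybar)`. -/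
theorem statement16 {X Y : Type*} [MetricSpace X] [MetricSpace Y]
    (F : X → Set Y) (xbar : X) (ybar : Y) (hbar : (xbar, ybar) ∈ gph F)
    (qq : ℝ) (hq0 : 0 < qq) (hq1 : qq ≤ 1) :
    srq F xbar ybar qq ≤ ussFq F xbar ybar qq := by
  by_contra hcon
  push_neg at hcon
  obtain ⟨α', h1, h2⟩ := EReal.exists_between_coe_real hcon
  obtain ⟨α, h3, h4⟩ := EReal.exists_between_coe_real h1
  have hα0 : (0 : ℝ) < α := by
    have h0 : (0 : EReal) < (α : EReal) :=
      lt_of_le_of_lt (ussFq_nonneg F xbar ybar hbar qq) h3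
    exact_mod_cast h0
  have hαα' : α < α' := by exact_mod_cast h4
  exact absurd (statement16_key F xbar ybar hbar qq hq0 hq1 hα0 hαα' h2)
    (not_le.mpr h3)

end HolderPaper
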